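/- For integers n and k with 0 ≤ k ≤ n−2, the real number ∑_{m=0}^{k} (-1)^m / ( m! · (k-m)! · (m+1) · (n-m) ) is strictly positive. -/

import Mathlib

/-!
By partial fractions, `1/((m+1)(n-m)) = (1/(n+1)) (1/(1+m) + 1/(n-m))`, so `k!` times the sum
splits into two instances of `∑ⱼ (-1)^j C(k,j)/(x+j) = k!/(x(x+1)⋯(x+k))`, the `k`-th forward
difference of `1/x`: one at `x = 1`, and, after reflecting `m ↦ k - m`, one at `x = n - k`.
Hence the sum is `(1/(n+1)) (1/(k+1)! + (-1)^k/((n-k)(n-k+1)⋯n))`, and since `n - k > 1` the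
second term is smaller in absolute value than the first.
-/

open Finset Polynomial fwdDiff

theorem neg_one_pow_mul_neg_one_pow_sub {R : Type*} [Monoid R] [HasDistribNeg R] {j k : ℕ}
    (h : j ≤ k) : (-1 : R) ^ k * (-1) ^ (k - j) = (-1) ^ j := by
  obtain ⟨d, rfl⟩ := Nat.exists_eq_add_of_le h
  rw [Nat.add_sub_cancel_left, pow_add, mul_assoc, ← pow_add, (Even.add_self d).neg_one_pow,
    mul_one]

theorem ascPochhammer_eval_succ_left {S : Type*} [CommSemiring S] (n : ℕ) (x : S) :
    (ascPochhammer S (n + 1)).eval x = x * (ascPochhammer S n).eval (x + 1) := by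
  rw [ascPochhammer_succ_left, eval_mul, eval_comp, eval_X, eval_add, eval_X, eval_one]

theorem ascPochhammer_eval_strictMonoOn {S : Type*} [Semiring S] [PartialOrder S]
    [IsStrictOrderedRing S] {n : ℕ} (hn : n ≠ 0) :
    StrictMonoOn (ascPochhammer S n).eval (Set.Ioi 0) := by
  obtain ⟨n, rfl⟩ := Nat.exists_eq_add_one_of_ne_zero hn
  intro x hx y hy hxy
  rw [Set.mem_Ioi] at hx hy
  simp only
  induction n with
  | zero => simpa using hxy
  | succ n ih =>
    rw [ascPochhammer_succ_eval, ascPochhammer_succ_eval (n + 1) y]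
    exact mul_lt_mul'' (ih n.succ_ne_zero) (by gcongr) (ascPochhammer_pos _ _ hx).le
      (by positivity)

section Field

variable {K : Type*} [Field K]

theorem fwdDiff_iter_inv (k : ℕ) {x : K} (hx : (ascPochhammer K (k + 1)).eval x ≠ 0) :
    (Δ_[1])^[k] (fun y : K ↦ y⁻¹) x =
      (-1) ^ k * k.factorial / (ascPochhammer K (k + 1)).eval x := by
  induction k generalizing x with
  | zero => simp
  | succ k ih =>
    have hleft := ascPochhammer_eval_succ_left (k + 1) x
    have hright := ascPochhammer_succ_eval (k + 1) x
    obtain ⟨hx₀, hshift⟩ : x ≠ 0 ∧ (ascPochhammer K (k + 1)).eval (x + 1) ≠ 0 := by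
      rwa [hleft, mul_ne_zero_iff] at hx
    obtain ⟨hP, hlast⟩ : (ascPochhammer K (k + 1)).eval x ≠ 0 ∧ x + (k + 1 : ℕ) ≠ 0 := by
      rwa [hright, mul_ne_zero_iff] at hx
    rw [Function.iterate_succ_apply', fwdDiff, ih hshift, ih hP, hleft]
    push_cast [Nat.factorial_succ] at hlast hright ⊢
    field_simp
    linear_combination -(-1) ^ k * (k.factorial : K) * hleft.symm.trans hright

theorem sum_range_neg_one_pow_mul_choose_div_add (k : ℕ) {x : K}
    (hx : (ascPochhammer K (k + 1)).eval x ≠ 0) :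
    ∑ j ∈ range (k + 1), (-1) ^ j * (k.choose j : K) / (x + j) =
      k.factorial / (ascPochhammer K (k + 1)).eval x := by
  have h := fwdDiff_iter_eq_sum_shift 1 (fun y : K ↦ y⁻¹) k x
  rw [fwdDiff_iter_inv k hx] at h
  calc ∑ j ∈ range (k + 1), (-1) ^ j * (k.choose j : K) / (x + j)
      = (-1) ^ k * ∑ j ∈ range (k + 1), ((-1 : ℤ) ^ (k - j) * k.choose j) • (x + j • 1)⁻¹ := by
        rw [mul_sum]
        refine sum_congr rfl fun j hj ↦ ?_
        rw [← neg_one_pow_mul_neg_one_pow_sub (Nat.lt_succ_iff.mp (mem_range.mp hj))]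
        simp only [zsmul_eq_mul, nsmul_eq_mul, mul_one]
        push_cast
        ring
    _ = k.factorial / (ascPochhammer K (k + 1)).eval x := by
        rw [← h, mul_div_assoc, ← mul_assoc, ← pow_add, (Even.add_self k).neg_one_pow, one_mul]

theorem sum_range_neg_one_pow_mul_choose_div_sub (k : ℕ) {y : K}
    (hy : (ascPochhammer K (k + 1)).eval (y - k) ≠ 0) :
    ∑ m ∈ range (k + 1), (-1) ^ m * (k.choose m : K) / (y - m) =
      (-1) ^ k * k.factorial / (ascPochhammer K (k + 1)).eval (y - k) := by
  rw [← sum_range_reflect, mul_div_assoc, ← sum_range_neg_one_pow_mul_choose_div_add k hy, mul_sum]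
  refine sum_congr rfl fun j hj ↦ ?_
  have hjk : j ≤ k := Nat.lt_succ_iff.mp (mem_range.mp hj)
  rw [Nat.add_sub_cancel, Nat.choose_symm hjk, Nat.cast_sub hjk,
    ← neg_one_pow_mul_neg_one_pow_sub (Nat.sub_le k j), Nat.sub_sub_self hjk]
  ring

end Field

theorem alternating_factorial_sum_eq {n k : ℕ} (h : k < n) :
    ∑ m ∈ range (k + 1), (-1 : ℝ) ^ m /
        ((m.factorial : ℝ) * ((k - m).factorial : ℝ) * ((m : ℝ) + 1) * ((n : ℝ) - m)) =
      (n + 1 : ℝ)⁻¹ *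
        (1 / (k + 1).factorial + (-1) ^ k / (ascPochhammer ℝ (k + 1)).eval ((n : ℝ) - k)) := by
  have hP : 0 < (ascPochhammer ℝ (k + 1)).eval ((n : ℝ) - k) :=
    ascPochhammer_pos _ _ (sub_pos.mpr (by exact_mod_cast h))
  have hsplit : ∑ m ∈ range (k + 1), (-1 : ℝ) ^ m /
        ((m.factorial : ℝ) * ((k - m).factorial : ℝ) * ((m : ℝ) + 1) * ((n : ℝ) - m)) =
      (k.factorial * (n + 1 : ℝ))⁻¹ * (∑ m ∈ range (k + 1), (-1) ^ m * (k.choose m : ℝ) / (1 + m) +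
        ∑ m ∈ range (k + 1), (-1) ^ m * (k.choose m : ℝ) / (n - m)) := by
    rw [← sum_add_distrib, mul_sum]
    refine sum_congr rfl fun m hm ↦ ?_
    have hmk : m ≤ k := Nat.lt_succ_iff.mp (mem_range.mp hm)
    have hmn : (n : ℝ) - m ≠ 0 := sub_ne_zero.mpr (by norm_cast; omega)
    rw [Nat.cast_choose ℝ hmk]
    field_simp
    ring
  rw [hsplit, sum_range_neg_one_pow_mul_choose_div_add k (by simp [Nat.factorial_ne_zero]),
    sum_range_neg_one_pow_mul_choose_div_sub k hP.ne', ascPochhammer_eval_one, Nat.factorial_succ]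
  push_cast
  field_simp

/-- For `0 ≤ k ≤ n − 2`, the sum `∑_{m=0}^{k} (-1)^m/(m!(k-m)!(m+1)(n-m))` is
strictly positive. -/
theorem alternating_factorial_sum_pos (n k : ℕ) (h : k + 2 ≤ n) :
    0 < ∑ m ∈ Finset.range (k + 1),
        (-1 : ℝ) ^ m /
          ((m.factorial : ℝ) * ((k - m).factorial : ℝ) * ((m : ℝ) + 1) * ((n : ℝ) - m)) := by
  rw [alternating_factorial_sum_eq (by omega)]
  have hnk : (1 : ℝ) < n - k := by
    rw [lt_sub_iff_add_lt']
    exact_mod_cast h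
  have hP : ((k + 1).factorial : ℝ) < (ascPochhammer ℝ (k + 1)).eval ((n : ℝ) - k) := by
    simpa using ascPochhammer_eval_strictMonoOn (S := ℝ) k.succ_ne_zero one_pos
      (one_pos.trans hnk) hnk
  have hfac : (0 : ℝ) < (k + 1).factorial := by positivity
  have hsign := neg_abs_le ((-1 : ℝ) ^ k / (ascPochhammer ℝ (k + 1)).eval ((n : ℝ) - k))
  rw [abs_div, abs_neg_one_pow, abs_of_pos (hfac.trans hP)] at hsign
  have hlt := one_div_lt_one_div_of_lt hfac hP
  exact mul_pos (by positivity) (by linarith)
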